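/- Let F ∈ ℝ^{m×n}, and let Γ_pr ∈ ℝ^{n×n} and R ∈ ℝ^{m×m} be symmetric positive definite. The matrix Γ_pr^{-1} + Fᵀ R^{-1} F is symmetric positive definite; set Γ_post := (Γ_pr^{-1} + Fᵀ R^{-1} F)^{-1}. Then −log det(Γ_post Γ_pr^{-1}) = log det(I_n + (R^{-1/2} F Γ_pr^{1/2})ᵀ (R^{-1/2} F Γ_pr^{1/2})). -/

import Mathlib

noncomputable section
open Matrix BigOperators Kronecker

/-- The selection matrix whose `j`-th column is the standard basis vector `e_{s j}`. -/
def selectionMatrix {M K : ℕ} (s : Fin K → Fin M) : Matrix (Fin M) (Fin K) ℝ :=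
  Matrix.of fun i j => if s j = i then 1 else 0

theorem Matrix.isHermitian_transpose_mul_self {m n : Type*} [Fintype m] (A : Matrix m n ℝ) :
    (Aᵀ * A).IsHermitian := by
  simpa [conjTranspose_eq_transpose_of_trivial] using isHermitian_conjTranspose_mul_self A

section
open scoped ComplexOrder

/-- The square root of a positive semidefinite matrix (the pre-2025 Mathlib definition). -/
noncomputable def Matrix.PosSemidef.sqrt {n 𝕜 : Type*} [Fintype n] [DecidableEq n] [RCLike 𝕜]
    {A : Matrix n n 𝕜} (hA : A.PosSemidef) : Matrix n n 𝕜 :=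
  hA.isHermitian.eigenvectorUnitary.1 * diagonal ((↑) ∘ (fun x => √x) ∘ hA.isHermitian.eigenvalues) *
    (star hA.isHermitian.eigenvectorUnitary : Matrix n n 𝕜)

end

/-- The singular values of a real matrix, arranged in decreasing order:
the nonnegative square roots of the eigenvalues of `AᵀA`. -/
noncomputable def singularValues {N M : ℕ} (A : Matrix (Fin N) (Fin M) ℝ) : Fin M → ℝ :=
  fun j =>
    Real.sqrt ((Matrix.isHermitian_transpose_mul_self A).eigenvalues
      (Tuple.sort (fun i => -(Matrix.isHermitian_transpose_mul_self A).eigenvalues i) j))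

/-- The spectral norm (largest singular value) of a real matrix. -/
noncomputable def specNorm {n m : ℕ} (B : Matrix (Fin n) (Fin m) ℝ) : ℝ :=
  ⨆ j, singularValues B j

/-- `Ψ(B) = logdet(I + B Bᵀ)`. -/
noncomputable def Psi {n m : ℕ} (B : Matrix (Fin n) (Fin m) ℝ) : ℝ :=
  Real.log (1 + B * Bᵀ).det

/-- The expected information gain `φ_EIG` of the selection `s` for the matrix `A`:
`logdet(I_N + (AS)(AS)ᵀ)`. -/
noncomputable def phiEIG {N M K : ℕ} (A : Matrix (Fin N) (Fin M) ℝ) (s : Fin K → Fin M) : ℝ :=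
  Psi (A * selectionMatrix s)

section
open scoped ComplexOrder
theorem Matrix.PosSemidef.posSemidef_sqrt {n 𝕜 : Type*} [Fintype n] [DecidableEq n] [RCLike 𝕜]
    {A : Matrix n n 𝕜} (hA : A.PosSemidef) : hA.sqrt.PosSemidef := by
  unfold Matrix.PosSemidef.sqrt
  have h := (posSemidef_diagonal_iff (d := ((↑) ∘ (fun x => √x) ∘ hA.isHermitian.eigenvalues : n → 𝕜))).mpr
    (fun i => RCLike.ofReal_nonneg.mpr (Real.sqrt_nonneg _))
  exact h.mul_mul_conjTranspose_same (hA.isHermitian.eigenvectorUnitary : Matrix n n 𝕜)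
theorem Matrix.PosSemidef.sqrt_mul_self {n 𝕜 : Type*} [Fintype n] [DecidableEq n] [RCLike 𝕜]
    {A : Matrix n n 𝕜} (hA : A.PosSemidef) : hA.sqrt * hA.sqrt = A := by
  conv_rhs => rw [hA.isHermitian.spectral_theorem]
  unfold Matrix.PosSemidef.sqrt
  have hU : (star hA.isHermitian.eigenvectorUnitary : Matrix n n 𝕜) *
      (hA.isHermitian.eigenvectorUnitary : Matrix n n 𝕜) = 1 := by simp
  rw [Unitary.conjStarAlgAut_apply]
  simp only [Matrix.mul_assoc]
  rw [← Matrix.mul_assoc (star _ : Matrix n n 𝕜) _ _, hU, Matrix.one_mul,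
    ← Matrix.mul_assoc (diagonal _) (diagonal _), diagonal_mul_diagonal]
  congr 3
  funext i
  simp only [Function.comp_apply, ← RCLike.ofReal_mul]
  rw [Real.mul_self_sqrt (hA.eigenvalues_nonneg i)]
end


/-- D-optimality / EIG identity:
`−logdet(Γ_post Γ_pr⁻¹) = logdet(I_n + (R^{-1/2} F Γ_pr^{1/2})ᵀ (R^{-1/2} F Γ_pr^{1/2}))`. -/
theorem eig_logdet_identity {m n : ℕ} (F : Matrix (Fin m) (Fin n) ℝ)
    (Γpr : Matrix (Fin n) (Fin n) ℝ) (R : Matrix (Fin m) (Fin m) ℝ)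
    (hΓ : Γpr.PosDef) (hR : R.PosDef) :
    (Γpr⁻¹ + Fᵀ * R⁻¹ * F).PosDef ∧
      -Real.log (((Γpr⁻¹ + Fᵀ * R⁻¹ * F)⁻¹ * Γpr⁻¹).det) =
        Real.log ((1 + ((hR.posSemidef.sqrt)⁻¹ * F * hΓ.posSemidef.sqrt)ᵀ *
            ((hR.posSemidef.sqrt)⁻¹ * F * hΓ.posSemidef.sqrt)).det) := by
  set S := hΓ.posSemidef.sqrt with hSdef
  set T := hR.posSemidef.sqrt with hTdef
  have hSS : S * S = Γpr := hΓ.posSemidef.sqrt_mul_self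
  have hTT : T * T = R := hR.posSemidef.sqrt_mul_self
  have hSsymm : Sᵀ = S := by
    have h := hΓ.posSemidef.posSemidef_sqrt.isHermitian
    simpa [Matrix.IsHermitian, Matrix.conjTranspose_eq_transpose_of_trivial] using h
  have hTsymm : Tᵀ = T := by
    have h := hR.posSemidef.posSemidef_sqrt.isHermitian
    simpa [Matrix.IsHermitian, Matrix.conjTranspose_eq_transpose_of_trivial] using h
  have hdetS : S.det * S.det = Γpr.det := by rw [← Matrix.det_mul, hSS]
  have hdetT : T.det * T.det = R.det := by rw [← Matrix.det_mul, hTT]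
  have hSdne : S.det ≠ 0 := by
    intro h; rw [h, mul_zero] at hdetS; exact hΓ.det_pos.ne' hdetS.symm
  have hTdne : T.det ≠ 0 := by
    intro h; rw [h, mul_zero] at hdetT; exact hR.det_pos.ne' hdetT.symm
  have hRinv : R⁻¹ = T⁻¹ * T⁻¹ := by rw [← hTT, Matrix.mul_inv_rev]
  have hFRF : (Fᵀ * R⁻¹ * F).PosSemidef := by
    have h := (hR.inv).posSemidef.conjTranspose_mul_mul_same F
    simpa [Matrix.conjTranspose_eq_transpose_of_trivial, Matrix.mul_assoc] using h
  have hA : (Γpr⁻¹ + Fᵀ * R⁻¹ * F).PosDef := hΓ.inv.add_posSemidef hFRF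
  refine ⟨hA, ?_⟩
  have hTinvT : (T⁻¹)ᵀ = T⁻¹ := by rw [Matrix.transpose_nonsing_inv, hTsymm]
  have hkey : (1 : Matrix (Fin n) (Fin n) ℝ) + (T⁻¹ * F * S)ᵀ * (T⁻¹ * F * S)
      = S * (Γpr⁻¹ + Fᵀ * R⁻¹ * F) * S := by
    have h1 : S * Γpr⁻¹ * S = 1 := by
      rw [← hSS, Matrix.mul_inv_rev, ← Matrix.mul_assoc, Matrix.mul_nonsing_inv _ hSdne.isUnit,
        Matrix.one_mul, Matrix.nonsing_inv_mul _ hSdne.isUnit]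
    rw [Matrix.mul_add, Matrix.add_mul, h1, hRinv]
    simp only [Matrix.transpose_mul, hSsymm, hTinvT, Matrix.mul_assoc]
  rw [hkey]
  have hdetSAS : (S * (Γpr⁻¹ + Fᵀ * R⁻¹ * F) * S).det
      = Γpr.det * (Γpr⁻¹ + Fᵀ * R⁻¹ * F).det := by
    rw [Matrix.det_mul, Matrix.det_mul, ← hdetS]; ring
  have hdetL : ((Γpr⁻¹ + Fᵀ * R⁻¹ * F)⁻¹ * Γpr⁻¹).det
      = (Γpr.det * (Γpr⁻¹ + Fᵀ * R⁻¹ * F).det)⁻¹ := by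
    rw [Matrix.det_mul, Matrix.det_nonsing_inv, Matrix.det_nonsing_inv]
    simp [Ring.inverse_eq_inv', mul_inv, mul_comm]
  rw [hdetL, hdetSAS, Real.log_inv, neg_neg]
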